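/- arXiv:2204.11987 — 9 statements merged into one kernel-verified Lean document; each statement's English description precedes it below -/
import Mathlib

section
/- For n ≥ 3, the orthogonal complement of ST inside the space of asymmetric weighted graphs on n vertices has dimension (n−1)(n−2)/2, and the family of three-cycle graphs {c(0, j, k) : 0 < j < k < n} is a basis of this orthogonal complement. -/
/-- An asymmetric weighted graph on `n` vertices. -/
def IsAsymGraph {n : ℕ} (d : Fin n → Fin n → ℝ) : Prop :=
  ∀ i j, d i j = -(d j i)

/-- Strong transitivity. -/
def StronglyTransitive {n : ℕ} (d : Fin n → Fin n → ℝ) : Prop :=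
  ∀ i j k, d i j + d j k = d i k

/-- The `d`-length of a walk `v` of length `m`. -/
def walkLen {n m : ℕ} (d : Fin n → Fin n → ℝ) (v : Fin (m + 1) → Fin n) : ℝ :=
  ∑ t : Fin m, d (v t.castSucc) (v t.succ)

/-- The inner product of two weighted graphs. -/
def ginner {n : ℕ} (d e : Fin n → Fin n → ℝ) : ℝ :=
  ∑ i : Fin n, ∑ j : Fin n, d i j * e i j

/-- `d` is orthogonal to every strongly transitive asymmetric graph. -/
def OrthST {n : ℕ} (d : Fin n → Fin n → ℝ) : Prop :=
  ∀ e : Fin n → Fin n → ℝ, IsAsymGraph e → StronglyTransitive e → ginner d e = 0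

/-- The three-cycle graph on the pairwise distinct vertices `p q r`. -/
def threeCycle {n : ℕ} (p q r : Fin n) : Fin n → Fin n → ℝ :=
  fun a b =>
    if (a, b) = (p, q) ∨ (a, b) = (q, r) ∨ (a, b) = (r, p) then 1
    else if (a, b) = (q, p) ∨ (a, b) = (r, q) ∨ (a, b) = (p, r) then -1
    else 0

/-- The `d`-length of a Hamiltonian circuit given by a bijection `v`. -/
def hamLen {n : ℕ} (d : Fin n → Fin n → ℝ) (v : Fin n → Fin n) : ℝ :=
  ∑ t : Fin n, d (v t) (v (finRotate n t))

/-!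
Testing an asymmetric graph `d` against the strongly transitive graphs `i j ↦ f i - f j` gives
`2 ∑ᵢ f i ∑ⱼ d i j`, so every graph orthogonal to `ST` has vanishing row sums; by asymmetry it is
then determined by its entries `d j k` with `0 < j < k`. Among these entries `c(0, j, k)` is the
indicator of `(j, k)`, and it is orthogonal to `ST` because the `e`-length of a cycle vanishes for
strongly transitive `e`. Hence the three-cycles `c(0, j, k)` form a basis of the complement, which
has dimension `(n - 1).choose 2`.
-/

section

variable {n : ℕ}

lemma ginner_add_left (d d' e : Fin n → Fin n → ℝ) :
    ginner (d + d') e = ginner d e + ginner d' e := by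
  simp only [ginner, Pi.add_apply, add_mul, Finset.sum_add_distrib]

lemma ginner_smul_left (c : ℝ) (d e : Fin n → Fin n → ℝ) :
    ginner (c • d) e = c * ginner d e := by
  simp only [ginner, Pi.smul_apply, smul_eq_mul, mul_assoc, Finset.mul_sum]

variable (n) in
def asymOrthST : Submodule ℝ (Fin n → Fin n → ℝ) where
  carrier := {d | IsAsymGraph d ∧ OrthST d}
  zero_mem' := ⟨fun _ _ => by simp, fun e _ _ => by simp [ginner]⟩
  add_mem' := fun {d d'} ⟨hd, hdo⟩ ⟨hd', hdo'⟩ =>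
    ⟨fun i j => by simp only [Pi.add_apply, hd i j, hd' i j]; ring,
     fun e he hte => by rw [ginner_add_left, hdo e he hte, hdo' e he hte, add_zero]⟩
  smul_mem' := fun c d ⟨hd, hdo⟩ =>
    ⟨fun i j => by simp only [Pi.smul_apply, smul_eq_mul, hd i j, mul_neg],
     fun e he hte => by rw [ginner_smul_left, hdo e he hte, mul_zero]⟩

lemma ginner_threeCycle {p q r : Fin n} (e : Fin n → Fin n → ℝ)
    (hpq : p ≠ q) (hqr : q ≠ r) (hpr : p ≠ r) :
    ginner (threeCycle p q r) e = e p q + e q r + e r p - e q p - e r q - e p r := by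
  have entry : ∀ a b, threeCycle p q r a b * e a b =
      (if a = p ∧ b = q then e a b else 0) + (if a = q ∧ b = r then e a b else 0)
      + (if a = r ∧ b = p then e a b else 0) - (if a = q ∧ b = p then e a b else 0)
      - (if a = r ∧ b = q then e a b else 0) - (if a = p ∧ b = r then e a b else 0) := by
    intro a b
    simp only [threeCycle, Prod.mk.injEq]
    split_ifs <;> grind
  simp [ginner, entry, Finset.sum_add_distrib, Finset.sum_sub_distrib, ite_and]

lemma threeCycle_mem_asymOrthST {p q r : Fin n} (hpq : p ≠ q) (hqr : q ≠ r) (hpr : p ≠ r) :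
    threeCycle p q r ∈ asymOrthST n := by
  refine ⟨fun a b => ?_, fun e he hte => ?_⟩
  · simp only [threeCycle, Prod.mk.injEq]
    split_ifs <;> grind
  · rw [ginner_threeCycle e hpq hqr hpr]
    linarith [hte p q r, he q p, he r q, he p r, he r p]

def potentialDiff (f : Fin n → ℝ) : Fin n → Fin n → ℝ := fun i j => f i - f j

lemma ginner_potentialDiff {d : Fin n → Fin n → ℝ} (hd : IsAsymGraph d) (f : Fin n → ℝ) :
    ginner d (potentialDiff f) = 2 * ∑ i, f i * ∑ j, d i j := by
  have swap : ∑ i, ∑ j, d i j * f j = -∑ i, ∑ j, d i j * f i := by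
    rw [Finset.sum_comm, ← Finset.sum_neg_distrib]
    refine Finset.sum_congr rfl fun i _ => ?_
    rw [← Finset.sum_neg_distrib]
    exact Finset.sum_congr rfl fun j _ => by rw [hd j i, neg_mul]
  simp only [ginner, potentialDiff, mul_sub, Finset.sum_sub_distrib, swap, sub_neg_eq_add,
    ← two_mul, Finset.mul_sum, mul_comm]

lemma sum_row_eq_zero_of_mem_asymOrthST {d : Fin n → Fin n → ℝ} (hd : d ∈ asymOrthST n)
    (m : Fin n) : ∑ j, d m j = 0 := by
  have h := hd.2 (potentialDiff (Pi.single m 1)) (fun i j => by simp only [potentialDiff]; ring)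
    (fun i j k => by simp only [potentialDiff]; ring)
  rw [ginner_potentialDiff hd.1] at h
  simpa [Pi.single_apply] using h

lemma eq_zero_of_mem_asymOrthST_of_eq_zero_off {d : Fin n → Fin n → ℝ} (hd : d ∈ asymOrthST n)
    (z : Fin n) (hoff : ∀ j k, j ≠ z → k ≠ z → d j k = 0) : d = 0 := by
  have hdiag : ∀ i, d i i = 0 := fun i => by linarith [hd.1 i i]
  have hcol : ∀ m, m ≠ z → d m z = 0 := fun m hm => by
    rw [← sum_row_eq_zero_of_mem_asymOrthST hd m,
      Finset.sum_eq_single z (fun j _ hj => hoff m j hm hj) (by simp)]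
  funext i j
  by_cases hi : i = z <;> by_cases hj : j = z
  · subst hi hj; exact hdiag _
  · subst hi; rw [hd.1, hcol j hj, neg_zero]; rfl
  · subst hj; exact hcol i hi
  · exact hoff i j hi hj

variable (n) in
abbrev UpperPair := {p : Fin n × Fin n // 0 < (p.1 : ℕ) ∧ p.1 < p.2}

lemma card_upperPair (hn : 0 < n) : Fintype.card (UpperPair n) = (n - 1) * (n - 2) / 2 := by
  let o : Fin n := ⟨0, hn⟩
  have hfilter : ({p : Fin n × Fin n | 0 < (p.1 : ℕ) ∧ p.1 < p.2} : Finset _) =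
      {p ∈ Finset.Ioi o ×ˢ Finset.Ioi o | p.1 < p.2} := by
    ext ⟨a, b⟩
    simp only [Finset.mem_filter, Finset.mem_univ, true_and, Finset.mem_product, Finset.mem_Ioi,
      Fin.lt_def, o]
    omega
  rw [Fintype.card_subtype, hfilter, Finset.card_product_filter_lt, Fin.card_Ioi,
    Nat.choose_two_right]
  congr 2

variable (n) in
def upperCoord : (Fin n → Fin n → ℝ) →ₗ[ℝ] (UpperPair n → ℝ) where
  toFun d p := d p.1.1 p.1.2
  map_add' _ _ := rfl
  map_smul' _ _ := rfl

variable (z : Fin n) (hz : (z : ℕ) = 0)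
include hz

lemma upperCoord_threeCycle (p : UpperPair n) :
    upperCoord n (threeCycle z p.1.1 p.1.2) = Pi.single p 1 := by
  obtain ⟨⟨j, k⟩, hj, hjk⟩ := p
  funext ⟨⟨a, b⟩, ha, hab⟩
  simp only [upperCoord, LinearMap.coe_mk, AddHom.coe_mk, threeCycle, Prod.mk.injEq,
    Pi.single_apply, Subtype.ext_iff]
  rw [Fin.lt_def] at hjk hab
  split_ifs <;> simp_all [Fin.ext_iff] <;> omega

lemma threeCycle_mem_asymOrthST_of_upperPair (p : UpperPair n) :
    threeCycle z p.1.1 p.1.2 ∈ asymOrthST n := by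
  have hj : 0 < (p.1.1 : ℕ) := p.2.1
  have hjk : (p.1.1 : ℕ) < p.1.2 := p.2.2
  apply threeCycle_mem_asymOrthST <;> rw [Ne, Fin.ext_iff] <;> omega

lemma linearIndependent_threeCycle :
    LinearIndependent ℝ (fun p : UpperPair n => threeCycle z p.1.1 p.1.2) := by
  refine LinearIndependent.of_comp (upperCoord n) ?_
  convert (Pi.basisFun ℝ (UpperPair n)).linearIndependent
  ext1 p
  simp [upperCoord_threeCycle z hz]

lemma eq_zero_of_mem_asymOrthST_of_upperCoord_eq_zero {d : Fin n → Fin n → ℝ}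
    (hd : d ∈ asymOrthST n) (h : upperCoord n d = 0) : d = 0 := by
  refine eq_zero_of_mem_asymOrthST_of_eq_zero_off hd z fun j k hj hk => ?_
  have hj : 0 < (j : ℕ) := by grind [Fin.ext_iff]
  have hk : 0 < (k : ℕ) := by grind [Fin.ext_iff]
  rcases lt_trichotomy j k with hjk | rfl | hkj
  · exact congrFun h ⟨(j, k), hj, hjk⟩
  · linarith [hd.1 j j]
  · rw [hd.1, neg_eq_zero]
    exact congrFun h ⟨(k, j), hk, hkj⟩

lemma span_threeCycle :
    Submodule.span ℝ (Set.range fun p : UpperPair n => threeCycle z p.1.1 p.1.2) =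
      asymOrthST n := by
  set V := Submodule.span ℝ (Set.range fun p : UpperPair n => threeCycle z p.1.1 p.1.2)
  have hle : V ≤ asymOrthST n :=
    Submodule.span_le.2 <| Set.range_subset_iff.2 <| threeCycle_mem_asymOrthST_of_upperPair z hz
  refine le_antisymm hle fun d hd => ?_
  set s := ∑ p : UpperPair n, d p.1.1 p.1.2 • threeCycle z p.1.1 p.1.2
  have hs : s ∈ V :=
    Submodule.sum_mem _ fun p _ => Submodule.smul_mem _ _ (Submodule.subset_span ⟨p, rfl⟩)
  have hcoord : upperCoord n s = upperCoord n d := by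
    simp only [s, map_sum, map_smul, upperCoord_threeCycle z hz]
    exact (pi_eq_sum_univ' (upperCoord n d)).symm
  have hds : d - s = 0 := eq_zero_of_mem_asymOrthST_of_upperCoord_eq_zero z hz
    (sub_mem hd (hle hs)) (by rw [map_sub, hcoord, sub_self])
  rwa [sub_eq_zero.1 hds]

end

theorem stmt3 (n : ℕ) (hn : 3 ≤ n) :
    ∃ S : Submodule ℝ (Fin n → Fin n → ℝ),
      (S : Set (Fin n → Fin n → ℝ)) = {d | IsAsymGraph d ∧ OrthST d} ∧
      Module.finrank ℝ S = (n - 1) * (n - 2) / 2 ∧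
      LinearIndependent ℝ
        (fun p : {p : Fin n × Fin n // 0 < (p.1 : ℕ) ∧ p.1 < p.2} =>
          threeCycle (⟨0, by omega⟩ : Fin n) p.1.1 p.1.2) ∧
      Submodule.span ℝ
        (Set.range (fun p : {p : Fin n × Fin n // 0 < (p.1 : ℕ) ∧ p.1 < p.2} =>
          threeCycle (⟨0, by omega⟩ : Fin n) p.1.1 p.1.2)) = S := by
  let z : Fin n := ⟨0, by omega⟩
  refine ⟨asymOrthST n, rfl, ?_, linearIndependent_threeCycle z rfl, span_threeCycle z rfl⟩
  rw [← span_threeCycle z rfl, finrank_span_eq_card (linearIndependent_threeCycle z rfl),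
    card_upperPair (by omega)]
end

section
/- Let n ≥ 3 and let N = (n−1)(n−2)/2. Suppose (p_i, q_i, r_i), for i ranging over an index set of cardinality N, is a family of triples of pairwise distinct vertices in Fin n such that for each index i there exist vertices a, b with c(p_i,q_i,r_i) a b ≠ 0 while c(p_j,q_j,r_j) a b = 0 for every j ≠ i. Then the family of three-cycle graphs {c(p_i,q_i,r_i)} is a basis of the orthogonal complement of ST inside the space of asymmetric weighted graphs on n vertices. -/
/-! An asymmetric graph is orthogonal to ST exactly when it is a circulation, i.e. every row sums
to zero: ST consists of the potential differences `f i - f j`, and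
`⟨d, f i - f j⟩ = 2 ∑ i, (∑ j, d i j) * f i`. A circulation is determined by its entries `d i j`
with `0 < i < j`, since the row sums recover the column at `0`; so circulations form a space of
dimension at most `(n - 1)(n - 2)/2`. The three-cycles are circulations, and an isolated nonzero
entry for each of them makes them linearly independent, so by counting they span. -/

lemma potential_isAsymGraph {n : ℕ} (f : Fin n → ℝ) : IsAsymGraph fun i j => f i - f j :=
  fun _ _ => by ring

lemma potential_stronglyTransitive {n : ℕ} (f : Fin n → ℝ) :
    StronglyTransitive fun i j => f i - f j :=
  fun _ _ _ => by ring

lemma IsAsymGraph.ginner_potential {n : ℕ} {d : Fin n → Fin n → ℝ} (hd : IsAsymGraph d)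
    (f : Fin n → ℝ) : ginner d (fun i j => f i - f j) = 2 * ∑ i, (∑ j, d i j) * f i := by
  have hswap : ∑ i, ∑ j, d i j * f j = -∑ i, ∑ j, d i j * f i := by
    rw [Finset.sum_comm, ← Finset.sum_neg_distrib]
    exact Finset.sum_congr rfl fun i _ => by
      rw [← Finset.sum_neg_distrib]
      exact Finset.sum_congr rfl fun j _ => by rw [hd]; ring
  simp only [ginner, mul_sub, Finset.sum_sub_distrib, hswap, Finset.sum_mul]
  ring

lemma StronglyTransitive.eq_potential {n : ℕ} {e : Fin n → Fin n → ℝ} (hst : StronglyTransitive e)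
    (he : IsAsymGraph e) (k : Fin n) : e = fun i j => e i k - e j k := by
  ext i j
  rw [← hst i k j, he k j, sub_eq_add_neg]

lemma IsAsymGraph.orthST_iff {n : ℕ} {d : Fin n → Fin n → ℝ} (hd : IsAsymGraph d) :
    OrthST d ↔ ∀ i, ∑ j, d i j = 0 := by
  constructor
  · intro ho k
    have h := ho _ (potential_isAsymGraph (Pi.single k 1))
      (potential_stronglyTransitive (Pi.single k 1))
    simpa [hd.ginner_potential, Pi.single_apply] using h
  · intro hrow e he hst
    rcases isEmpty_or_nonempty (Fin n) with _ | ⟨⟨k⟩⟩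
    · simp [ginner]
    · rw [hst.eq_potential he k, hd.ginner_potential]
      simp [hrow]

lemma threeCycle_isAsymGraph {n : ℕ} {p q r : Fin n} (hpq : p ≠ q) (hqr : q ≠ r) (hpr : p ≠ r) :
    IsAsymGraph (threeCycle p q r) := by
  intro a b
  simp only [threeCycle, Prod.mk.injEq]
  split_ifs <;> grind

lemma threeCycle_rowSum {n : ℕ} {p q r : Fin n} (hpq : p ≠ q) (hqr : q ≠ r) (hpr : p ≠ r)
    (a : Fin n) : ∑ b, threeCycle p q r a b = 0 := by
  by_cases hp : a = p <;> by_cases hq : a = q <;> by_cases hr : a = r <;> subst_vars <;>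
    simp_all [threeCycle, Finset.sum_ite, Finset.filter_eq', hpq.symm, hqr.symm, hpr.symm]

def circulations (n : ℕ) : Submodule ℝ (Fin n → Fin n → ℝ) where
  carrier := {d | IsAsymGraph d ∧ ∀ i, ∑ j, d i j = 0}
  add_mem' {d e} hd he :=
    ⟨fun i j => by simp only [Pi.add_apply, hd.1 i j, he.1 i j]; ring,
     fun i => by simp only [Pi.add_apply, Finset.sum_add_distrib, hd.2 i, he.2 i, add_zero]⟩
  zero_mem' := ⟨fun _ _ => by simp, fun _ => by simp⟩
  smul_mem' c d hd :=
    ⟨fun i j => by simp only [Pi.smul_apply, smul_eq_mul, hd.1 i j, mul_neg],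
     fun i => by simp only [Pi.smul_apply, smul_eq_mul, ← Finset.mul_sum, hd.2 i, mul_zero]⟩

lemma coe_circulations (n : ℕ) :
    (circulations n : Set (Fin n → Fin n → ℝ)) = {d | IsAsymGraph d ∧ OrthST d} := by
  ext d
  exact and_congr_right fun hd => hd.orthST_iff.symm

lemma threeCycle_mem_circulations {n : ℕ} {p q r : Fin n} (hpq : p ≠ q) (hqr : q ≠ r)
    (hpr : p ≠ r) : threeCycle p q r ∈ circulations n :=
  ⟨threeCycle_isAsymGraph hpq hqr hpr, threeCycle_rowSum hpq hqr hpr⟩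

lemma eq_zero_of_mem_circulations {m : ℕ} {d : Fin (m + 1) → Fin (m + 1) → ℝ}
    (hd : d ∈ circulations (m + 1)) (hz : ∀ i j : Fin m, i < j → d i.succ j.succ = 0) : d = 0 := by
  obtain ⟨hasym, hrow⟩ := hd
  have hdiag : ∀ i, d i i = 0 := fun i => by linarith [hasym i i]
  have hsucc : ∀ i j : Fin m, d i.succ j.succ = 0 := fun i j => by
    rcases lt_trichotomy i j with h | rfl | h
    · exact hz i j h
    · exact hdiag _
    · rw [hasym, hz j i h, neg_zero]
  have hcol : ∀ i : Fin m, d i.succ 0 = 0 := fun i => by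
    simpa [Fin.sum_univ_succ, hsucc] using hrow i.succ
  ext i j
  induction i using Fin.cases <;> induction j using Fin.cases <;>
    simp [hdiag, hsucc, hcol, hasym 0]

lemma finrank_circulations_le (n : ℕ) : Module.finrank ℝ (circulations n) ≤ (n - 1).choose 2 := by
  obtain _ | m := n
  · simp [Module.finrank_zero_of_subsingleton]
  let restrict : circulations (m + 1) →ₗ[ℝ] ({x : Fin m × Fin m // x.1 < x.2} → ℝ) :=
    { toFun := fun d x => d.1 x.1.1.succ x.1.2.succ
      map_add' := fun _ _ => rfl
      map_smul' := fun _ _ => rfl }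
  have hinj : Function.Injective restrict := by
    refine (injective_iff_map_eq_zero _).mpr fun d hd => Subtype.ext ?_
    exact eq_zero_of_mem_circulations d.2 fun i j hij => congrFun hd ⟨(i, j), hij⟩
  simpa [Fintype.card_subtype, Fintype.card_product_filter_lt] using
    LinearMap.finrank_le_finrank_of_injective hinj

lemma linearIndependent_of_exists_isolated_entry {K ι α β : Type*} [Field K] [Fintype ι]
    {v : ι → α → β → K} (h : ∀ i, ∃ a b, v i a b ≠ 0 ∧ ∀ j, j ≠ i → v j a b = 0) :
    LinearIndependent K v := by
  choose a b hne hzero using h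
  refine LinearIndependent.of_pairwise_dual_eq_zero_one v
    (fun i => (v i (a i) (b i))⁻¹ •
      ((LinearMap.proj (b i) : (β → K) →ₗ[K] K) ∘ₗ LinearMap.proj (a i)))
    (fun i j hij => ?_) fun i => ?_
  · simp [hzero i j hij.symm]
  · simp [hne i]

theorem stmt4_general (n : ℕ) (ι : Type) [Fintype ι]
    (hcard : Fintype.card ι = (n - 1) * (n - 2) / 2)
    (p q r : ι → Fin n)
    (hdist : ∀ i, p i ≠ q i ∧ q i ≠ r i ∧ p i ≠ r i)
    (hsep : ∀ i : ι, ∃ a b : Fin n, threeCycle (p i) (q i) (r i) a b ≠ 0 ∧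
      ∀ j : ι, j ≠ i → threeCycle (p j) (q j) (r j) a b = 0) :
    ∃ S : Submodule ℝ (Fin n → Fin n → ℝ),
      (S : Set (Fin n → Fin n → ℝ)) = {d | IsAsymGraph d ∧ OrthST d} ∧
      LinearIndependent ℝ (fun i : ι => threeCycle (p i) (q i) (r i)) ∧
      Submodule.span ℝ (Set.range fun i : ι => threeCycle (p i) (q i) (r i)) = S := by
  have hli := linearIndependent_of_exists_isolated_entry hsep
  refine ⟨circulations n, coe_circulations n, hli, ?_⟩
  have hle : Submodule.span ℝ (Set.range fun i => threeCycle (p i) (q i) (r i)) ≤ circulations n :=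
    Submodule.span_le.mpr <| Set.range_subset_iff.mpr fun i =>
      threeCycle_mem_circulations (hdist i).1 (hdist i).2.1 (hdist i).2.2
  refine Submodule.eq_of_le_of_finrank_le hle ?_
  rw [finrank_span_eq_card hli, hcard, show n - 2 = n - 1 - 1 by omega, ← Nat.choose_two_right]
  exact finrank_circulations_le n

theorem stmt4 (n : ℕ) (hn : 3 ≤ n) (ι : Type) [Fintype ι]
    (hcard : Fintype.card ι = (n - 1) * (n - 2) / 2)
    (p q r : ι → Fin n)
    (hdist : ∀ i, p i ≠ q i ∧ q i ≠ r i ∧ p i ≠ r i)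
    (hsep : ∀ i : ι, ∃ a b : Fin n, threeCycle (p i) (q i) (r i) a b ≠ 0 ∧
      ∀ j : ι, j ≠ i → threeCycle (p j) (q j) (r j) a b = 0) :
    ∃ S : Submodule ℝ (Fin n → Fin n → ℝ),
      (S : Set (Fin n → Fin n → ℝ)) = {d | IsAsymGraph d ∧ OrthST d} ∧
      LinearIndependent ℝ (fun i : ι => threeCycle (p i) (q i) (r i)) ∧
      Submodule.span ℝ (Set.range fun i : ι => threeCycle (p i) (q i) (r i)) = S :=
  stmt4_general n ι hcard p q r hdist hsep
end

section
/- For every asymmetric weighted graph d on n vertices there exist a unique d₁ ∈ ST and a unique asymmetric graph d₂ orthogonal to ST such that d = d₁ + d₂; moreover, for every closed walk v, the d-length of v equals the d₂-length of v. -/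
/-!
A strongly transitive graph is a potential difference `d i j = g i - g j`. For an asymmetric `q`,
`ginner q (g i - g j) = 2 ∑ᵢ g i ∑ⱼ q i j`, so `q` is orthogonal to `ST` as soon as its row sums
vanish. Subtracting from `d` the potential difference of its row averages leaves zero row sums,
which gives the decomposition; uniqueness holds because a graph in `ST` orthogonal to `ST` is
orthogonal to itself. Along a closed walk a potential difference telescopes to `0`.
-/

open Finset

section AsymGraph

variable {n : ℕ}

theorem StronglyTransitive.isAsymGraph {d : Fin n → Fin n → ℝ} (hd : StronglyTransitive d) :
    IsAsymGraph d := by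
  intro i j
  linarith [hd i j i, hd i i i]

theorem StronglyTransitive.exists_potential {d : Fin n → Fin n → ℝ} (hd : StronglyTransitive d) :
    ∃ g : Fin n → ℝ, ∀ i j, d i j = g i - g j := by
  cases n with
  | zero => exact ⟨0, fun i => i.elim0⟩
  | succ n => exact ⟨fun i => d i 0, fun i j => by linarith [hd i j 0]⟩

theorem StronglyTransitive.sub {d e : Fin n → Fin n → ℝ} (hd : StronglyTransitive d)
    (he : StronglyTransitive e) : StronglyTransitive (d - e) := by
  intro i j k
  simp only [Pi.sub_apply]
  linarith [hd i j k, he i j k]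

theorem ginner_sub_left (d d' e : Fin n → Fin n → ℝ) :
    ginner (d - d') e = ginner d e - ginner d' e := by
  simp only [ginner, Pi.sub_apply, sub_mul, sum_sub_distrib]

theorem OrthST.sub {d d' : Fin n → Fin n → ℝ} (hd : OrthST d) (hd' : OrthST d') :
    OrthST (d - d') := by
  intro e he hte
  rw [ginner_sub_left, hd e he hte, hd' e he hte, sub_zero]

theorem eq_zero_of_ginner_self_eq_zero {d : Fin n → Fin n → ℝ} (h : ginner d d = 0) : d = 0 := by
  have hrow := (sum_eq_zero_iff_of_nonneg fun i _ =>
    sum_nonneg fun j _ => mul_self_nonneg (d i j)).mp h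
  funext i j
  exact mul_self_eq_zero.mp <| (sum_eq_zero_iff_of_nonneg fun j _ => mul_self_nonneg (d i j)).mp
    (hrow i (mem_univ i)) j (mem_univ j)

theorem StronglyTransitive.eq_zero_of_orthST {d : Fin n → Fin n → ℝ} (hd : StronglyTransitive d)
    (hd' : OrthST d) : d = 0 :=
  eq_zero_of_ginner_self_eq_zero (hd' d hd.isAsymGraph hd)

theorem IsAsymGraph.sum_col {q : Fin n → Fin n → ℝ} (hq : IsAsymGraph q) (j : Fin n) :
    ∑ i, q i j = -∑ i, q j i := by
  rw [← sum_neg_distrib]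
  exact sum_congr rfl fun i _ => hq i j

theorem IsAsymGraph.sum_sum_eq_zero {q : Fin n → Fin n → ℝ} (hq : IsAsymGraph q) :
    ∑ i, ∑ j, q i j = 0 := by
  have h : ∑ i, ∑ j, q i j = -∑ i, ∑ j, q i j := by
    rw [← sum_neg_distrib, sum_comm]
    exact sum_congr rfl fun j _ => hq.sum_col j
  linarith

theorem IsAsymGraph.orthST_of_sum_row_eq_zero {q : Fin n → Fin n → ℝ} (hq : IsAsymGraph q)
    (hrow : ∀ i, ∑ j, q i j = 0) : OrthST q := by
  intro e _ hte
  obtain ⟨g, hg⟩ := hte.exists_potential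
  have hcol : ∀ j, ∑ i, q i j = 0 := fun j => by rw [hq.sum_col j, hrow j, neg_zero]
  calc ginner q e = ∑ i, (∑ j, q i j) * g i - ∑ j, (∑ i, q i j) * g j := by
        simp only [ginner, hg, mul_sub, sum_sub_distrib, sum_mul]
        rw [sum_comm (f := fun i j => q i j * g j)]
    _ = 0 := by simp [hrow, hcol]

theorem IsAsymGraph.exists_decomposition {d : Fin n → Fin n → ℝ} (hd : IsAsymGraph d) :
    ∃ a b : Fin n → Fin n → ℝ,
      StronglyTransitive a ∧ IsAsymGraph b ∧ OrthST b ∧ d = a + b := by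
  set f : Fin n → ℝ := fun i => (∑ j, d i j) / n
  have hrow : ∀ i, ∑ j, (d i j - (f i - f j)) = 0 := by
    intro i
    have hn : (n : ℝ) ≠ 0 := Nat.cast_ne_zero.mpr (Fin.pos i).ne'
    have hf : ∑ j, f j = 0 := by simp only [f, ← sum_div, hd.sum_sum_eq_zero, zero_div]
    simp only [sum_sub_distrib, hf, sum_const, card_univ, Fintype.card_fin, nsmul_eq_mul, f]
    field_simp
    ring
  have hb : IsAsymGraph fun i j => d i j - (f i - f j) := fun i j => by
    dsimp only
    rw [hd i j]
    ring
  exact ⟨fun i j => f i - f j, _, fun i j k => by ring, hb, hb.orthST_of_sum_row_eq_zero hrow,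
    by funext i j; simp⟩

theorem decomposition_unique {a b a' b' : Fin n → Fin n → ℝ} (ha : StronglyTransitive a)
    (hb : OrthST b) (ha' : StronglyTransitive a') (hb' : OrthST b') (h : a + b = a' + b') :
    a = a' ∧ b = b' := by
  have hdiff : a - a' = b' - b := by
    rw [sub_eq_sub_iff_add_eq_add, h, add_comm]
  have hzero : a - a' = 0 := (ha.sub ha').eq_zero_of_orthST (hdiff ▸ hb'.sub hb)
  exact ⟨sub_eq_zero.mp hzero, (sub_eq_zero.mp (hdiff ▸ hzero)).symm⟩

theorem walkLen_add {m : ℕ} (d e : Fin n → Fin n → ℝ) (v : Fin (m + 1) → Fin n) :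
    walkLen (d + e) v = walkLen d v + walkLen e v := by
  simp only [walkLen, Pi.add_apply, sum_add_distrib]

theorem walkLen_of_potential {m : ℕ} {d : Fin n → Fin n → ℝ} {g : Fin n → ℝ}
    (hg : ∀ i j, d i j = g i - g j) (v : Fin (m + 1) → Fin n) :
    walkLen d v = g (v 0) - g (v (Fin.last m)) := by
  simp only [walkLen, hg, sum_sub_distrib]
  linarith [Fin.sum_univ_castSucc fun t => g (v t), Fin.sum_univ_succ fun t => g (v t)]

theorem StronglyTransitive.walkLen_eq_zero {m : ℕ} {d : Fin n → Fin n → ℝ}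
    (hd : StronglyTransitive d) {v : Fin (m + 1) → Fin n} (hv : v (Fin.last m) = v 0) :
    walkLen d v = 0 := by
  obtain ⟨g, hg⟩ := hd.exists_potential
  rw [walkLen_of_potential hg, hv, sub_self]

end AsymGraph

theorem stmt5 (n : ℕ) (d : Fin n → Fin n → ℝ) (hd : IsAsymGraph d) :
    (∃! p : (Fin n → Fin n → ℝ) × (Fin n → Fin n → ℝ),
      (IsAsymGraph p.1 ∧ StronglyTransitive p.1) ∧
      (IsAsymGraph p.2 ∧ OrthST p.2) ∧ d = p.1 + p.2) ∧
    ∀ d₁ d₂ : Fin n → Fin n → ℝ,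
      IsAsymGraph d₁ → StronglyTransitive d₁ → IsAsymGraph d₂ → OrthST d₂ →
      d = d₁ + d₂ →
      ∀ (m : ℕ) (v : Fin (m + 1) → Fin n), v (Fin.last m) = v 0 →
        walkLen d v = walkLen d₂ v := by
  obtain ⟨a, b, ha, hb, hb', hab⟩ := hd.exists_decomposition
  refine ⟨⟨(a, b), ⟨⟨ha.isAsymGraph, ha⟩, ⟨hb, hb'⟩, hab⟩, ?_⟩, ?_⟩
  · rintro ⟨a', b'⟩ ⟨⟨-, ha'⟩, ⟨-, hb''⟩, hab'⟩
    obtain ⟨rfl, rfl⟩ := decomposition_unique ha' hb'' ha hb' (hab'.symm.trans hab)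
    rfl
  · rintro d₁ d₂ - hd₁ - - rfl m v hv
    rw [walkLen_add, hd₁.walkLen_eq_zero hv, zero_add]
end

section
/- Let n ≥ 1 and let d be an asymmetric weighted graph on n vertices; define S(j) = (1/n) ∑_{k} d j k for each vertex j. Then ∑_j S(j) = 0, and if d = d₁ + d₂ with d₁ ∈ ST and d₂ orthogonal to ST, then d₁ i j = S(i) − S(j) for all i, j. -/
lemma asym_double_sum {n : ℕ} (d : Fin n → Fin n → ℝ) (hd : IsAsymGraph d) :
    ∑ j : Fin n, ∑ k : Fin n, d j k = 0 := by
  have h : ∑ j : Fin n, ∑ k : Fin n, d j k = -∑ j : Fin n, ∑ k : Fin n, d j k := by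
    calc ∑ j : Fin n, ∑ k : Fin n, d j k
        = ∑ k : Fin n, ∑ j : Fin n, d j k := Finset.sum_comm
      _ = ∑ k : Fin n, ∑ j : Fin n, -(d k j) :=
          Finset.sum_congr rfl fun k _ => Finset.sum_congr rfl fun j _ => hd j k
      _ = -∑ j : Fin n, ∑ k : Fin n, d j k := by
          simp [Finset.sum_neg_distrib]
  linarith

lemma orth_row_sum {n : ℕ} (d₂ : Fin n → Fin n → ℝ) (hd₂ : IsAsymGraph d₂)
    (ho : OrthST d₂) (j₀ : Fin n) : ∑ k : Fin n, d₂ j₀ k = 0 := by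
  set e : Fin n → Fin n → ℝ := fun a b =>
    (if a = j₀ then (1:ℝ) else 0) - (if b = j₀ then (1:ℝ) else 0) with he
  have h1 : ginner d₂ e = 0 := by
    apply ho
    · intro i j; simp only [he]; ring
    · intro i j k; simp only [he]; ring
  have hrow : ∀ i, ∑ j, d₂ i j * e i j
      = (if i = j₀ then ∑ j, d₂ i j else 0) - d₂ i j₀ := by
    intro i
    simp only [he, mul_sub, Finset.sum_sub_distrib, mul_ite, mul_one, mul_zero]
    congr 1
    · split_ifs <;> simp
    · simp
  have h2 : ginner d₂ e = 2 * ∑ k : Fin n, d₂ j₀ k := by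
    unfold ginner
    simp_rw [hrow]
    rw [Finset.sum_sub_distrib, Finset.sum_ite_eq' Finset.univ j₀ (fun i => ∑ j, d₂ i j)]
    have : ∑ i, d₂ i j₀ = -∑ k, d₂ j₀ k := by
      simp_rw [fun i => hd₂ i j₀]; simp
    rw [this]; simp; ring
  rw [h1] at h2; linarith

theorem stmt7 (n : ℕ) (hn : 1 ≤ n) (d : Fin n → Fin n → ℝ) (hd : IsAsymGraph d) :
    (∑ j : Fin n, (1 / (n : ℝ)) * ∑ k : Fin n, d j k) = 0 ∧
    ∀ d₁ d₂ : Fin n → Fin n → ℝ,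
      IsAsymGraph d₁ → StronglyTransitive d₁ → IsAsymGraph d₂ → OrthST d₂ →
      d = d₁ + d₂ →
      ∀ i j : Fin n, d₁ i j =
        (1 / (n : ℝ)) * (∑ k : Fin n, d i k) - (1 / (n : ℝ)) * (∑ k : Fin n, d j k) := by
  have hn0 : (n : ℝ) ≠ 0 := Nat.cast_ne_zero.mpr (by omega)
  constructor
  · rw [← Finset.mul_sum, asym_double_sum d hd, mul_zero]
  · intro d₁ d₂ h1a h1t h2a h2o heq i j
    have hrow : ∀ m : Fin n, ∑ k : Fin n, d m k = ∑ k : Fin n, d₁ m k := by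
      intro m
      have := orth_row_sum d₂ h2a h2o m
      have : ∑ k : Fin n, d m k = ∑ k : Fin n, (d₁ m k + d₂ m k) := by
        apply Finset.sum_congr rfl; intro k _; rw [heq]; rfl
      rw [this, Finset.sum_add_distrib, orth_row_sum d₂ h2a h2o m, add_zero]
    rw [hrow i, hrow j]
    have key : ∑ k : Fin n, (d₁ i k - d₁ j k) = n * d₁ i j := by
      have : ∀ k, d₁ i k - d₁ j k = d₁ i j := by
        intro k
        have := h1t i k j
        have := h1a k j
        linarith
      simp_rw [this, Finset.sum_const, Finset.card_univ, Fintype.card_fin, nsmul_eq_mul]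
    rw [Finset.sum_sub_distrib] at key
    field_simp
    linarith
end

section
/- An asymmetric weighted graph d on n vertices is orthogonal to every element of ST if and only if ∑_{k} d j k = 0 for every vertex j. -/
theorem stmt8 (n : ℕ) (d : Fin n → Fin n → ℝ) (hd : IsAsymGraph d) :
    OrthST d ↔ ∀ j : Fin n, ∑ k : Fin n, d j k = 0 := by
  constructor
  · intro h j
    set e : Fin n → Fin n → ℝ :=
      fun i k => (if i = j then (1:ℝ) else 0) - (if k = j then 1 else 0) with he
    have hasym : IsAsymGraph e := by intro i k; simp [he]; try ring
    have hst : StronglyTransitive e := by intro i k l; simp [he]; try ring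
    have h0 := h e hasym hst
    unfold ginner at h0
    simp only [he, mul_sub, Finset.sum_sub_distrib, mul_ite, mul_one, mul_zero,
      Finset.sum_ite_eq', Finset.mem_univ, if_true] at h0
    rw [Finset.sum_comm (f := fun i k => if i = j then d i k else 0)] at h0
    simp only [Finset.sum_ite_eq', Finset.mem_univ, if_true] at h0
    have h1 : ∑ k : Fin n, d k j = -∑ k : Fin n, d j k := by
      rw [← Finset.sum_neg_distrib]
      exact Finset.sum_congr rfl fun k _ => by rw [hd k j]
    rw [h1] at h0
    linarith
  · intro hrow e hasym hst
    unfold ginner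
    rcases n with _ | m
    · simp
    have he : ∀ i k : Fin (m+1), e i k = e i 0 - e k 0 := by
      intro i k; have := hst i k 0; linarith
    have hcol : ∀ k : Fin (m+1), ∑ i : Fin (m+1), d i k = 0 := by
      intro k
      have : ∑ i : Fin (m+1), d i k = -∑ i : Fin (m+1), d k i := by
        rw [← Finset.sum_neg_distrib]
        exact Finset.sum_congr rfl fun i _ => by rw [hd i k]
      rw [this, hrow k, neg_zero]
    calc ∑ i : Fin (m+1), ∑ k : Fin (m+1), d i k * e i k
        = ∑ i : Fin (m+1), ∑ k : Fin (m+1), (d i k * e i 0 - d i k * e k 0) := by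
          refine Finset.sum_congr rfl fun i _ => Finset.sum_congr rfl fun k _ => ?_
          rw [he i k]; ring
      _ = (∑ i : Fin (m+1), (∑ k : Fin (m+1), d i k) * e i 0)
            - ∑ k : Fin (m+1), (∑ i : Fin (m+1), d i k) * e k 0 := by
          simp only [Finset.sum_sub_distrib]
          congr 1
          · exact Finset.sum_congr rfl fun i _ => by rw [Finset.sum_mul]
          · rw [Finset.sum_comm]
            exact Finset.sum_congr rfl fun k _ => by rw [Finset.sum_mul]
      _ = 0 := by
          simp only [hrow, hcol, zero_mul, Finset.sum_const_zero, sub_zero]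
end

section
/- Let n ≥ 4 and let d be a symmetric weighted graph on n vertices. Then d is closed-path independent — meaning that for every m ≥ 3 and every pair of injective maps u, w : Fin m → Fin n with the same range, the cyclic lengths ∑_{t : Fin m} d (u t) (u (t+1)) and ∑_{t : Fin m} d (w t) (w (t+1)) (with t+1 cyclic in Fin m) are equal — if and only if there exists ω : Fin n → ℝ with d i j = ω i + ω j for all i ≠ j. Moreover, in that case, for every m ≥ 2 and every injective u : Fin m → Fin n, the cyclic length ∑_{t : Fin m} d (u t) (u (t+1)) equals 2 ∑_{t : Fin m} ω (u t). -/
/-- A symmetric weighted graph on `n` vertices. -/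
def IsSymGraph {n : ℕ} (d : Fin n → Fin n → ℝ) : Prop :=
  (∀ i j, d i j = d j i) ∧ ∀ i, d i i = 0

/-- The cyclic `d`-length of a map `u : Fin m → Fin n`
(the index `t + 1` is taken cyclically, via `finRotate`). -/
def cycLen {n m : ℕ} (d : Fin n → Fin n → ℝ) (u : Fin m → Fin n) : ℝ :=
  ∑ t : Fin m, d (u t) (u (finRotate m t))

/-- Membership in CPI: a symmetric graph whose off-diagonal entries are
`ω i + ω j` for some vertex weights `ω`. -/
def InCPI {n : ℕ} (d : Fin n → Fin n → ℝ) : Prop :=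
  IsSymGraph d ∧ ∃ ω : Fin n → ℝ, ∀ i j, i ≠ j → d i j = ω i + ω j

/-- `d` is orthogonal to every element of CPI. -/
def OrthCPI {n : ℕ} (d : Fin n → Fin n → ℝ) : Prop :=
  ∀ e : Fin n → Fin n → ℝ, InCPI e → ginner d e = 0

/-- The four-cycle graph on pairwise distinct vertices `i j k s`. -/
def fourCycle {n : ℕ} (i j k s : Fin n) : Fin n → Fin n → ℝ :=
  fun a b =>
    if (a, b) = (i, j) ∨ (a, b) = (j, i) then 1
    else if (a, b) = (j, k) ∨ (a, b) = (k, j) then -1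
    else if (a, b) = (k, s) ∨ (a, b) = (s, k) then 1
    else if (a, b) = (s, i) ∨ (a, b) = (i, s) then -1
    else 0

lemma cycLen_four {n : ℕ} (d : Fin n → Fin n → ℝ) (i j k s : Fin n) :
    cycLen d ![i,j,k,s] = d i j + d j k + d k s + d s i := by
  simp [cycLen, Fin.sum_univ_four, finRotate_succ_apply]

lemma inj_four {n : ℕ} (i j k s : Fin n) (hij : i ≠ j) (hik : i ≠ k) (his : i ≠ s)
    (hjk : j ≠ k) (hjs : j ≠ s) (hks : k ≠ s) : Function.Injective ![i,j,k,s] := by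
  intro x y hxy
  fin_cases x <;> fin_cases y <;> simp_all

lemma range_four {n : ℕ} (i j k s : Fin n) :
    Set.range ![i,j,k,s] = Set.range ![i,k,j,s] := by
  ext x; simp [Set.range, Fin.exists_fin_succ]; tauto

lemma cyc_formula {n : ℕ} (d : Fin n → Fin n → ℝ) (ω : Fin n → ℝ)
    (hω : ∀ i j, i ≠ j → d i j = ω i + ω j)
    (m : ℕ) (hm : 2 ≤ m) (u : Fin m → Fin n) (hu : Function.Injective u) :
    cycLen d u = 2 * ∑ t : Fin m, ω (u t) := by
  have hfix : ∀ t : Fin m, t ≠ finRotate m t := by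
    obtain ⟨k, rfl⟩ : ∃ k, m = k + 1 := ⟨m - 1, by omega⟩
    intro t h
    rw [finRotate_succ_apply] at h
    have : (1 : Fin (k+1)) = 0 := by
      have := congrArg (· - t) h
      simpa [add_comm, add_sub_cancel_right] using this.symm
    have := congrArg Fin.val this
    simp [Fin.val_one, Nat.one_mod_eq_one.mpr] at this
    omega
  have : cycLen d u = ∑ t : Fin m, (ω (u t) + ω (u (finRotate m t))) := by
    apply Finset.sum_congr rfl
    intro t _
    exact hω _ _ (fun h => hfix t (hu h))
  rw [this, Finset.sum_add_distrib]
  have := Equiv.sum_comp (finRotate m) (fun t => ω (u t))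
  rw [this]; ring

theorem stmt13 (n : ℕ) (hn : 4 ≤ n) (d : Fin n → Fin n → ℝ) (hd : IsSymGraph d) :
    ((∀ (m : ℕ), 3 ≤ m → ∀ u w : Fin m → Fin n, Function.Injective u →
        Function.Injective w → Set.range u = Set.range w → cycLen d u = cycLen d w) ↔
      ∃ ω : Fin n → ℝ, ∀ i j, i ≠ j → d i j = ω i + ω j) ∧
    ∀ ω : Fin n → ℝ, (∀ i j, i ≠ j → d i j = ω i + ω j) →
      ∀ (m : ℕ), 2 ≤ m → ∀ u : Fin m → Fin n, Function.Injective u →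
        cycLen d u = 2 * ∑ t : Fin m, ω (u t) := by
  obtain ⟨hsym, hdiag⟩ := hd
  constructor
  · constructor
    · intro h
      have key4 : ∀ i j k s : Fin n, i ≠ j → i ≠ k → i ≠ s → j ≠ k → j ≠ s → k ≠ s →
          d i j + d k s = d i k + d j s := by
        intro i j k s hij hik his hjk hjs hks
        have h1 := h 4 (by norm_num) ![i,j,k,s] ![i,k,j,s]
          (inj_four i j k s hij hik his hjk hjs hks)
          (inj_four i k j s hik hij his (Ne.symm hjk) hks hjs)
          (range_four i j k s)
        rw [cycLen_four, cycLen_four] at h1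
        linarith [hsym j k]
      set a : Fin n := ⟨0, by omega⟩ with ha
      set b : Fin n := ⟨1, by omega⟩ with hb
      set c : Fin n := ⟨2, by omega⟩ with hc
      have hab : a ≠ b := by simp [ha, hb, Fin.ext_iff]
      have hac : a ≠ c := by simp [ha, hc, Fin.ext_iff]
      have hbc : b ≠ c := by simp [hb, hc, Fin.ext_iff]
      set ω : Fin n → ℝ := fun x => if x = a then (d a b + d a c - d b c)/2
          else if x = b then (d a b + d b c - d a c)/2
          else (d x a + d x b - d a b)/2 with hW
      have hωa : ω a = (d a b + d a c - d b c)/2 := by simp [hW]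
      have hωb : ω b = (d a b + d b c - d a c)/2 := by simp [hW, hab.symm]
      have hωo : ∀ x, x ≠ a → x ≠ b → ω x = (d x a + d x b - d a b)/2 := by
        intro x h1 h2; simp [hW, h1, h2]
      have sympair : ∀ i j : Fin n, d j i = ω j + ω i → d i j = ω i + ω j := by
        intro i j hji; rw [hsym i j, hji]; ring
      have caseAB : d a b = ω a + ω b := by rw [hωa, hωb]; ring
      have caseA : ∀ j, j ≠ a → j ≠ b → d a j = ω a + ω j := by
        intro j hja hjb
        rw [hωa, hωo j hja hjb]
        rcases eq_or_ne j c with rfl | hjc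
        · linarith [hsym c a, hsym c b]
        · have k1 := key4 a b j c hab (Ne.symm hja) hac (Ne.symm hjb) hbc hjc
          have k2 := key4 a b c j hab hac (Ne.symm hja) hbc (Ne.symm hjb) (Ne.symm hjc)
          linarith [hsym j a, hsym j b, hsym j c, hsym c j]
      have caseB : ∀ j, j ≠ a → j ≠ b → d b j = ω b + ω j := by
        intro j hja hjb
        rw [hωb, hωo j hja hjb]
        rcases eq_or_ne j c with rfl | hjc
        · linarith [hsym c a, hsym c b]
        · have k1 := key4 b j c a (Ne.symm hjb) hbc hab.symm hjc hja hac.symm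
          linarith [hsym b j, hsym c a, hsym j a, hsym j b]
      have caseO : ∀ i j, i ≠ j → i ≠ a → i ≠ b → j ≠ a → j ≠ b →
          d i j = ω i + ω j := by
        intro i j hij hia hib hja hjb
        rw [hωo i hia hib, hωo j hja hjb]
        have k1 := key4 i j a b hij hia hib hja hjb hab
        have k2 := key4 i j b a hij hib hia hjb hja hab.symm
        linarith [hsym a b]
      refine ⟨ω, ?_⟩
      intro i j hij
      rcases eq_or_ne i a with rfl | hia
      · rcases eq_or_ne j b with rfl | hjb
        · exact caseAB
        · exact caseA j (Ne.symm hij) hjb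
      · rcases eq_or_ne i b with rfl | hib
        · rcases eq_or_ne j a with rfl | hja
          · exact sympair _ _ caseAB
          · exact caseB j hja (Ne.symm hij)
        · rcases eq_or_ne j a with rfl | hja
          · exact sympair _ _ (caseA i hia hib)
          · rcases eq_or_ne j b with rfl | hjb
            · exact sympair _ _ (caseB i hia hib)
            · exact caseO i j hij hia hib hja hjb
    · rintro ⟨ω, hω⟩ m hm u w hu hw hr
      rw [cyc_formula d ω hω m (by omega) u hu, cyc_formula d ω hω m (by omega) w hw]
      congr 1
      have himg : (Finset.univ.image u) = (Finset.univ.image w) := by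
        apply Finset.coe_injective
        simp only [Finset.coe_image, Finset.coe_univ, Set.image_univ, hr]
      calc ∑ t : Fin m, ω (u t)
          = ∑ x ∈ Finset.univ.image u, ω x :=
            (Finset.sum_image fun x _ y _ hxy => hu hxy).symm
        _ = ∑ x ∈ Finset.univ.image w, ω x := by rw [himg]
        _ = ∑ t : Fin m, ω (w t) := Finset.sum_image fun x _ y _ hxy => hw hxy
  · intro ω hω m hm u hu
    exact cyc_formula d ω hω m hm u hu
end

section
/- Let n ≥ 4. Every four-cycle graph b(i,j,k,s) is orthogonal to CPI; the span of all four-cycle graphs equals the orthogonal complement of CPI inside the space of symmetric weighted graphs on n vertices and has dimension n(n−3)/2; moreover the family {b(0,1,j,k) : 2 ≤ j < k ≤ n−1} ∪ {b(0,1,j,2) : 3 ≤ j ≤ n−1} is a basis of this orthogonal complement. -/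
/-!
Pairing a zero-diagonal graph `d` with a CPI graph of vertex weights `ω` gives
`∑ i, ω i * (row sum + column sum of d at i)`. Hence the orthogonal complement `S` of CPI among
symmetric graphs consists of the symmetric zero-diagonal graphs with zero row sums, and every
four-cycle lies in `S`: it is a signed sum of four edges, and each of its vertices meets one edge
of each sign.

An element `d ∈ S` is determined by the entries `d j k` with `2 ≤ j < k` and `d 1 j` with `3 ≤ j`.
If these vanish, the row sum at `j ≥ 3` leaves only `d j 0`, so `d` is supported on the triangle
`{0, 1, 2}`, where zero row sums force `d = 0`. Thus `dim S ≤ (n - 2).choose 2 + (n - 3)`, which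
is `n * (n - 3) / 2`. The given family has that many members and is linearly independent, since
against these coordinates it is triangular: `b(0,1,j,k)` has entry `1` at `(j, k)` and `-1` at
`(1, j)`, while `b(0,1,j,2)` has entry `1` at `(2, j)` and `-1` at `(1, j)`. So it is a basis of
`S`, and `S` is then also the span of all four-cycles.
-/

open Finset

section Orthogonality

variable {n : ℕ} {d : Fin n → Fin n → ℝ}

lemma ginner_eq_sum_mul_rowSum_add_colSum {e : Fin n → Fin n → ℝ} {ω : Fin n → ℝ}
    (hd : ∀ i, d i i = 0) (he : ∀ i j, i ≠ j → e i j = ω i + ω j) :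
    ginner d e = ∑ i, ω i * (∑ j, d i j + ∑ j, d j i) := by
  have hentry : ∀ i j, d i j * e i j = ω i * d i j + ω j * d i j := by
    intro i j
    rcases eq_or_ne i j with rfl | hij
    · simp [hd]
    · rw [he i j hij]; ring
  simp only [ginner, hentry, sum_add_distrib, mul_add, mul_sum]
  rw [sum_comm (f := fun i j => ω j * d i j)]

lemma orthCPI_of_rowSum_eq_zero (hd : IsSymGraph d) (hrow : ∀ i, ∑ j, d i j = 0) :
    OrthCPI d := by
  rintro e ⟨-, ω, hω⟩
  simp [ginner_eq_sum_mul_rowSum_add_colSum hd.2 hω, ← hd.1, hrow]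

lemma rowSum_eq_zero_of_orthCPI (hd : IsSymGraph d) (horth : OrthCPI d) (i₀ : Fin n) :
    ∑ j, d i₀ j = 0 := by
  let ω : Fin n → ℝ := fun i => if i = i₀ then 1 else 0
  have hstar : InCPI (fun i j => if i = j then 0 else ω i + ω j) :=
    ⟨⟨fun i j => by simp only [eq_comm, add_comm], fun i => if_pos rfl⟩, ω,
      fun i j hij => if_neg hij⟩
  have h := horth _ hstar
  rw [ginner_eq_sum_mul_rowSum_add_colSum hd.2 (fun i j hij => if_neg hij)] at h
  simp only [ω, ite_mul, one_mul, zero_mul, sum_ite_eq', mem_univ, if_true, ← hd.1] at h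
  linarith

end Orthogonality

def zeroRowSumGraphs (n : ℕ) : Submodule ℝ (Fin n → Fin n → ℝ) where
  carrier := {d | IsSymGraph d ∧ ∀ i, ∑ j, d i j = 0}
  add_mem' := by
    rintro d e ⟨⟨hd, hd'⟩, hdr⟩ ⟨⟨he, he'⟩, her⟩
    refine ⟨⟨fun i j => ?_, fun i => ?_⟩, fun i => ?_⟩ <;>
      simp [hd, he, hd', he', hdr, her, sum_add_distrib]
  zero_mem' := by simp [IsSymGraph]
  smul_mem' := by
    rintro c d ⟨⟨hd, hd'⟩, hdr⟩
    refine ⟨⟨fun i j => ?_, fun i => ?_⟩, fun i => ?_⟩ <;> simp [hd, hd', ← mul_sum, hdr]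

lemma coe_zeroRowSumGraphs (n : ℕ) :
    (zeroRowSumGraphs n : Set (Fin n → Fin n → ℝ)) = {d | IsSymGraph d ∧ OrthCPI d} := by
  ext d
  constructor
  · rintro ⟨hd, hrow⟩
    exact ⟨hd, orthCPI_of_rowSum_eq_zero hd hrow⟩
  · rintro ⟨hd, horth⟩
    exact ⟨hd, rowSum_eq_zero_of_orthCPI hd horth⟩

lemma eq_zero_of_rows_eq_zero_off_triangle {n : ℕ} {d : Fin n → Fin n → ℝ}
    (hd : d ∈ zeroRowSumGraphs n) {a b c : Fin n} (hab : a ≠ b) (hac : a ≠ c) (hbc : b ≠ c)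
    (hout : ∀ x, x ≠ a → x ≠ b → x ≠ c → ∀ v, d x v = 0) : d = 0 := by
  obtain ⟨⟨hsym, hdiag⟩, hrow⟩ := hd
  have htri : ∀ x y z : Fin n, x ≠ y → x ≠ z → y ≠ z →
      (∀ t, t ≠ x → t ≠ y → t ≠ z → ∀ v, d t v = 0) → d x y + d x z = 0 := by
    intro x y z hxy hxz hyz hout
    rw [← hrow x, Fintype.sum_eq_add y z hyz fun t ⟨hty, htz⟩ => ?_]
    by_cases htx : t = x
    · rw [htx, hdiag]
    · rw [hsym]; exact hout t htx hty htz x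
  have ha := htri a b c hab hac hbc hout
  have hb := htri b a c hab.symm hbc hac fun t h₁ h₂ h₃ => hout t h₂ h₁ h₃
  have hc := htri c a b hac.symm hbc.symm hab fun t h₁ h₂ h₃ => hout t h₂ h₃ h₁
  have hab₀ : d a b = 0 := by linarith [hsym a b, hsym a c, hsym b c]
  have hac₀ : d a c = 0 := by linarith [hsym a b, hsym a c, hsym b c]
  have hbc₀ : d b c = 0 := by linarith [hsym a b, hsym a c, hsym b c]
  funext u v
  by_cases hu : u ≠ a ∧ u ≠ b ∧ u ≠ c
  · exact hout u hu.1 hu.2.1 hu.2.2 v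
  by_cases hv : v ≠ a ∧ v ≠ b ∧ v ≠ c
  · rw [hsym]; exact hout v hv.1 hv.2.1 hv.2.2 u
  simp only [not_and_or, not_not] at hu hv
  rcases hu with hu | hu | hu <;> rcases hv with hv | hv | hv <;> rw [hu, hv] <;>
    first | exact hdiag _ | assumption | (rw [hsym]; assumption)

section FourCycle

variable {n : ℕ}

def edgeGraph (x y : Fin n) : Fin n → Fin n → ℝ :=
  fun a b => if s(a, b) = s(x, y) then 1 else 0

lemma sum_edgeGraph {x y : Fin n} (hxy : x ≠ y) (a : Fin n) :
    ∑ b, edgeGraph x y a b = (if a = x then 1 else 0) + (if a = y then 1 else 0) := by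
  have h : ∀ b, edgeGraph x y a b =
      (if a = x ∧ b = y then 1 else 0) + (if a = y ∧ b = x then 1 else 0) := by
    intro b
    simp only [edgeGraph, Sym2.eq_iff]
    split_ifs <;> grind
  simp [h, sum_add_distrib, ite_and]

lemma fourCycle_eq_edgeGraph {i j k s : Fin n} (hij : i ≠ j) (hik : i ≠ k) (his : i ≠ s)
    (hjk : j ≠ k) (hjs : j ≠ s) (hks : k ≠ s) :
    fourCycle i j k s = edgeGraph i j - edgeGraph j k + edgeGraph k s - edgeGraph s i := by
  ext a b
  simp only [fourCycle, edgeGraph, Sym2.eq_iff, Pi.add_apply, Pi.sub_apply, Prod.mk.injEq]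
  split_ifs <;> grind

lemma fourCycle_symm (i j k s a b : Fin n) : fourCycle i j k s a b = fourCycle i j k s b a := by
  simp only [fourCycle, Prod.mk.injEq]
  split_ifs <;> grind

lemma fourCycle_self {i j k s : Fin n} (hij : i ≠ j) (hjk : j ≠ k) (hks : k ≠ s) (hsi : s ≠ i)
    (a : Fin n) : fourCycle i j k s a a = 0 := by
  simp only [fourCycle, Prod.mk.injEq]
  split_ifs <;> grind

lemma sum_fourCycle {i j k s : Fin n} (hij : i ≠ j) (hik : i ≠ k) (his : i ≠ s)
    (hjk : j ≠ k) (hjs : j ≠ s) (hks : k ≠ s) (a : Fin n) :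
    ∑ b, fourCycle i j k s a b = 0 := by
  simp only [fourCycle_eq_edgeGraph hij hik his hjk hjs hks, Pi.add_apply, Pi.sub_apply,
    sum_add_distrib, sum_sub_distrib, sum_edgeGraph hij, sum_edgeGraph hjk, sum_edgeGraph hks,
    sum_edgeGraph his.symm]
  ring

lemma fourCycle_mem_zeroRowSumGraphs {i j k s : Fin n} (hij : i ≠ j) (hik : i ≠ k)
    (his : i ≠ s) (hjk : j ≠ k) (hjs : j ≠ s) (hks : k ≠ s) :
    fourCycle i j k s ∈ zeroRowSumGraphs n :=
  ⟨⟨fourCycle_symm i j k s, fourCycle_self hij hjk hks his.symm⟩,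
    sum_fourCycle hij hik his hjk hjs hks⟩

end FourCycle

def fourCycles (n : ℕ) : Set (Fin n → Fin n → ℝ) :=
  {g | ∃ i j k s : Fin n, i ≠ j ∧ i ≠ k ∧ i ≠ s ∧ j ≠ k ∧ j ≠ s ∧ k ≠ s ∧ g = fourCycle i j k s}

lemma fourCycles_subset_zeroRowSumGraphs (n : ℕ) : fourCycles n ⊆ zeroRowSumGraphs n := by
  rintro _ ⟨i, j, k, s, hij, hik, his, hjk, hjs, hks, rfl⟩
  exact fourCycle_mem_zeroRowSumGraphs hij hik his hjk hjs hks

abbrev HighPair (n : ℕ) := {p : Fin n × Fin n // 2 ≤ (p.1 : ℕ) ∧ p.1 < p.2}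

abbrev HighVertex (n : ℕ) := {j : Fin n // 3 ≤ (j : ℕ)}

section Counting

variable {n : ℕ}

lemma card_filter_le_val (m : ℕ) : #{j : Fin n | m ≤ (j : ℕ)} = n - m := by
  have := card_filter_add_card_filter_not (s := univ) (fun j : Fin n => (j : ℕ) < m)
  simp only [not_lt, Fin.card_filter_val_lt, card_univ, Fintype.card_fin] at this
  omega

lemma card_highPair : Fintype.card (HighPair n) = (n - 2).choose 2 := by
  rw [Fintype.card_subtype, ← card_filter_le_val, ← card_product_filter_lt]
  congr 1
  ext p
  simp only [mem_filter, mem_univ, true_and, mem_product, Fin.lt_def]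
  omega

lemma card_highVertex : Fintype.card (HighVertex n) = n - 3 := by
  rw [Fintype.card_subtype, card_filter_le_val]

lemma card_highPair_sum_highVertex (hn : 3 ≤ n) :
    Fintype.card (HighPair n ⊕ HighVertex n) = n * (n - 3) / 2 := by
  obtain ⟨m, rfl⟩ : ∃ m, n = m + 3 := ⟨n - 3, by omega⟩
  rw [Fintype.card_sum, card_highPair, card_highVertex, Nat.choose_two_right,
    show m + 3 - 2 - 1 = m by omega, show m + 3 - 3 = m by omega,
    show (m + 3) * m = (m + 3 - 2) * m + m * 2 by grind, Nat.add_mul_div_right _ _ two_pos]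

end Counting

def cycleFamily {n : ℕ} (z₀ z₁ z₂ : Fin n) :
    HighPair n ⊕ HighVertex n → Fin n → Fin n → ℝ :=
  Sum.elim (fun p => fourCycle z₀ z₁ p.1.1 p.1.2) (fun w => fourCycle z₀ z₁ w.1 z₂)

def highCoords {n : ℕ} (z₁ : Fin n) :
    (Fin n → Fin n → ℝ) →ₗ[ℝ] (HighPair n ⊕ HighVertex n → ℝ) where
  toFun d := Sum.elim (fun p => d p.1.1 p.1.2) (fun w => d z₁ w.1)
  map_add' d e := by ext (p | w) <;> rfl
  map_smul' c d := by ext (p | w) <;> rfl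

section CycleFamily

variable {n : ℕ} {z₀ z₁ z₂ : Fin n} (h₀ : (z₀ : ℕ) = 0) (h₁ : (z₁ : ℕ) = 1)
  (h₂ : (z₂ : ℕ) = 2)
include h₀ h₁

lemma fourCycle_highPair_apply_highPair (p q : HighPair n) :
    fourCycle z₀ z₁ p.1.1 p.1.2 q.1.1 q.1.2 = if p = q then 1 else 0 := by
  have := p.2; have := q.2
  simp only [fourCycle, Subtype.ext_iff, Prod.ext_iff, Fin.ext_iff, Fin.lt_def] at *
  split_ifs <;> (try norm_num) <;> omega

lemma fourCycle_highPair_apply_z₁ (p : HighPair n) (w : HighVertex n) :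
    fourCycle z₀ z₁ p.1.1 p.1.2 z₁ w.1 = if p.1.1 = w.1 then -1 else 0 := by
  have := p.2; have := w.2
  simp only [fourCycle, Prod.ext_iff, Fin.ext_iff, Fin.lt_def, true_and] at *
  split_ifs <;> (try norm_num) <;> omega

include h₂

lemma fourCycle_highVertex_apply_highPair (w : HighVertex n) (q : HighPair n) :
    fourCycle z₀ z₁ w.1 z₂ q.1.1 q.1.2 = if q.1 = (z₂, w.1) then 1 else 0 := by
  have := w.2; have := q.2
  simp only [fourCycle, Prod.ext_iff, Fin.ext_iff, Fin.lt_def] at *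
  split_ifs <;> (try norm_num) <;> omega

lemma fourCycle_highVertex_apply_z₁ (v w : HighVertex n) :
    fourCycle z₀ z₁ v.1 z₂ z₁ w.1 = if v = w then -1 else 0 := by
  have := v.2; have := w.2
  simp only [fourCycle, Subtype.ext_iff, Prod.ext_iff, Fin.ext_iff, true_and] at *
  split_ifs <;> (try norm_num) <;> omega

lemma linearIndependent_cycleFamily : LinearIndependent ℝ (cycleFamily z₀ z₁ z₂) := by
  rw [Fintype.linearIndependent_iff]
  intro g hg
  have hentry : ∀ u v, ∑ p, g (.inl p) * fourCycle z₀ z₁ p.1.1 p.1.2 u v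
      + ∑ w, g (.inr w) * fourCycle z₀ z₁ w.1 z₂ u v = 0 := fun u v => by
    simpa [Fintype.sum_sum_type, cycleFamily] using congrFun (congrFun hg u) v
  have hpair : ∀ q : HighPair n,
      g (.inl q) + ∑ w, g (.inr w) * (if q.1 = (z₂, w.1) then 1 else 0) = 0 := fun q => by
    simpa [fourCycle_highPair_apply_highPair h₀ h₁,
      fourCycle_highVertex_apply_highPair h₀ h₁ h₂] using hentry q.1.1 q.1.2
  have hpair₃ : ∀ q : HighPair n, 3 ≤ (q.1.1 : ℕ) → g (.inl q) = 0 := fun q hq => by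
    have hq₂ : ∀ w : HighVertex n, q.1 ≠ (z₂, w.1) := fun w h => by
      have := congrArg (fun x : Fin n × Fin n => (x.1 : ℕ)) h
      simp only at this
      omega
    simpa [hq₂] using hpair q
  have hvertex : ∀ w : HighVertex n, g (.inr w) = 0 := fun w => by
    have := hentry z₁ w.1
    simp only [fourCycle_highPair_apply_z₁ h₀ h₁, fourCycle_highVertex_apply_z₁ h₀ h₁ h₂,
      mul_ite, mul_neg, mul_one, mul_zero, sum_ite_eq', mem_univ, if_true] at this
    have hsum : ∑ p : HighPair n, (if p.1.1 = w.1 then -g (.inl p) else 0) = 0 :=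
      sum_eq_zero fun p _ => by
        split_ifs with h
        · rw [hpair₃ p (h ▸ w.2), neg_zero]
        · rfl
    linarith
  rintro (q | w)
  · simpa [hvertex] using hpair q
  · exact hvertex w

lemma range_cycleFamily_subset_fourCycles : Set.range (cycleFamily z₀ z₁ z₂) ⊆ fourCycles n := by
  rintro _ ⟨p | w, rfl⟩
  · have := p.2
    rw [Fin.lt_def] at this
    refine ⟨z₀, z₁, p.1.1, p.1.2, ?_, ?_, ?_, ?_, ?_, ?_, rfl⟩ <;>
      rw [ne_eq, Fin.ext_iff] <;> omega
  · have := w.2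
    refine ⟨z₀, z₁, w.1, z₂, ?_, ?_, ?_, ?_, ?_, ?_, rfl⟩ <;> rw [ne_eq, Fin.ext_iff] <;> omega

lemma eq_zero_of_highCoords_eq_zero {d : Fin n → Fin n → ℝ} (hd : d ∈ zeroRowSumGraphs n)
    (hcoords : highCoords z₁ d = 0) : d = 0 := by
  obtain ⟨⟨hsym, hdiag⟩, hrow⟩ := hd
  have hpair : ∀ p : HighPair n, d p.1.1 p.1.2 = 0 := fun p => congrFun hcoords (.inl p)
  have hz₁ : ∀ w : HighVertex n, d z₁ w.1 = 0 := fun w => congrFun hcoords (.inr w)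
  have hhigh : ∀ u v : Fin n, 2 ≤ (u : ℕ) → 2 ≤ (v : ℕ) → d u v = 0 := by
    intro u v hu hv
    rcases lt_trichotomy u v with h | rfl | h
    · exact hpair ⟨(u, v), hu, h⟩
    · exact hdiag u
    · rw [hsym]; exact hpair ⟨(v, u), hv, h⟩
  have hrow₃ : ∀ w : Fin n, 3 ≤ (w : ℕ) → ∀ v, d w v = 0 := by
    intro w hw
    have hne : ∀ v, v ≠ z₀ → d w v = 0 := by
      intro v hv
      by_cases hv₁ : v = z₁
      · rw [hv₁, hsym]; exact hz₁ ⟨w, hw⟩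
      · have := Fin.val_ne_of_ne hv; have := Fin.val_ne_of_ne hv₁
        exact hhigh w v (by omega) (by omega)
    have hwz₀ : d w z₀ = 0 := by
      rw [← hrow w, Fintype.sum_eq_single z₀ hne]
    intro v
    by_cases hv : v = z₀
    · rw [hv, hwz₀]
    · exact hne v hv
  refine eq_zero_of_rows_eq_zero_off_triangle (a := z₀) (b := z₁) (c := z₂)
    ⟨⟨hsym, hdiag⟩, hrow⟩ (Fin.ne_of_val_ne (by omega)) (Fin.ne_of_val_ne (by omega))
    (Fin.ne_of_val_ne (by omega)) fun x hx₀ hx₁ hx₂ => hrow₃ x ?_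
  have := Fin.val_ne_of_ne hx₀; have := Fin.val_ne_of_ne hx₁; have := Fin.val_ne_of_ne hx₂
  omega

lemma finrank_zeroRowSumGraphs_le :
    Module.finrank ℝ (zeroRowSumGraphs n) ≤ Fintype.card (HighPair n ⊕ HighVertex n) := by
  have hinj : Function.Injective ((highCoords z₁).comp (zeroRowSumGraphs n).subtype) := by
    rw [← LinearMap.ker_eq_bot, LinearMap.ker_eq_bot']
    intro d hd
    exact Subtype.ext (eq_zero_of_highCoords_eq_zero h₀ h₁ h₂ d.2 hd)
  simpa using LinearMap.finrank_le_finrank_of_injective hinj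

lemma span_range_cycleFamily :
    Submodule.span ℝ (Set.range (cycleFamily z₀ z₁ z₂)) = zeroRowSumGraphs n := by
  apply Submodule.eq_of_le_of_finrank_le
  · rw [Submodule.span_le]
    exact (range_cycleFamily_subset_fourCycles h₀ h₁ h₂).trans
      (fourCycles_subset_zeroRowSumGraphs n)
  · rw [finrank_span_eq_card (linearIndependent_cycleFamily h₀ h₁ h₂)]
    exact finrank_zeroRowSumGraphs_le h₀ h₁ h₂

end CycleFamily
theorem stmt15 (n : ℕ) (hn : 4 ≤ n) :
    (∀ i j k s : Fin n, i ≠ j → i ≠ k → i ≠ s → j ≠ k → j ≠ s → k ≠ s →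
      ∀ e, InCPI e → ginner (fourCycle i j k s) e = 0) ∧
    ∃ S : Submodule ℝ (Fin n → Fin n → ℝ),
      (S : Set (Fin n → Fin n → ℝ)) = {d | IsSymGraph d ∧ OrthCPI d} ∧
      Submodule.span ℝ {g : Fin n → Fin n → ℝ |
        ∃ i j k s : Fin n, i ≠ j ∧ i ≠ k ∧ i ≠ s ∧ j ≠ k ∧ j ≠ s ∧ k ≠ s ∧
          g = fourCycle i j k s} = S ∧
      Module.finrank ℝ S = n * (n - 3) / 2 ∧
      LinearIndependent ℝ
        (Sum.elim
          (fun p : {p : Fin n × Fin n // 2 ≤ (p.1 : ℕ) ∧ p.1 < p.2} =>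
            fourCycle (⟨0, by omega⟩ : Fin n) ⟨1, by omega⟩ p.1.1 p.1.2)
          (fun j : {j : Fin n // 3 ≤ (j : ℕ)} =>
            fourCycle (⟨0, by omega⟩ : Fin n) ⟨1, by omega⟩ j.1 ⟨2, by omega⟩)) ∧
      Submodule.span ℝ
        (Set.range (Sum.elim
          (fun p : {p : Fin n × Fin n // 2 ≤ (p.1 : ℕ) ∧ p.1 < p.2} =>
            fourCycle (⟨0, by omega⟩ : Fin n) ⟨1, by omega⟩ p.1.1 p.1.2)
          (fun j : {j : Fin n // 3 ≤ (j : ℕ)} =>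
            fourCycle (⟨0, by omega⟩ : Fin n) ⟨1, by omega⟩ j.1 ⟨2, by omega⟩))) = S := by
  have hindep := linearIndependent_cycleFamily (n := n) (z₀ := ⟨0, by omega⟩)
    (z₁ := ⟨1, by omega⟩) (z₂ := ⟨2, by omega⟩) rfl rfl rfl
  have hspan := span_range_cycleFamily (n := n) (z₀ := ⟨0, by omega⟩)
    (z₁ := ⟨1, by omega⟩) (z₂ := ⟨2, by omega⟩) rfl rfl rfl
  refine ⟨fun i j k s hij hik his hjk hjs hks => ?_, zeroRowSumGraphs n,
    coe_zeroRowSumGraphs n, ?_, ?_, hindep, hspan⟩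
  · obtain ⟨hd, hrow⟩ := fourCycle_mem_zeroRowSumGraphs hij hik his hjk hjs hks
    exact orthCPI_of_rowSum_eq_zero hd hrow
  · refine le_antisymm (Submodule.span_le.2 (fourCycles_subset_zeroRowSumGraphs n)) ?_
    rw [← hspan]
    exact Submodule.span_mono (range_cycleFamily_subset_fourCycles rfl rfl rfl)
  · rw [← hspan, finrank_span_eq_card hindep, card_highPair_sum_highVertex (by omega)]
end

section
/- Let n ≥ 4 and let d be a symmetric weighted graph on n vertices. Define S(j) = ∑_{k} d j k, T = (1/(n−1)) ∑_{j} S(j), and ω_j = (S(j) − T/2)/(n−2). If d = d₁ + d₂ with d₁ ∈ CPI and d₂ orthogonal to CPI, then d₁ i j = ω_i + ω_j for all i ≠ j (and d₁ j j = 0). -/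
theorem stmt17 (n : ℕ) (hn : 4 ≤ n) (d : Fin n → Fin n → ℝ) (hd : IsSymGraph d)
    (d₁ d₂ : Fin n → Fin n → ℝ) (h1 : InCPI d₁) (h2 : IsSymGraph d₂) (h2o : OrthCPI d₂)
    (hdd : d = d₁ + d₂) :
    (∀ i j : Fin n, i ≠ j →
      d₁ i j =
        ((∑ k : Fin n, d i k) -
            ((1 / ((n : ℝ) - 1)) * ∑ l : Fin n, ∑ k : Fin n, d l k) / 2) / ((n : ℝ) - 2) +
        ((∑ k : Fin n, d j k) -
            ((1 / ((n : ℝ) - 1)) * ∑ l : Fin n, ∑ k : Fin n, d l k) / 2) / ((n : ℝ) - 2)) ∧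
    ∀ j, d₁ j j = 0 := by
  obtain ⟨⟨hsym1, hdiag1⟩, ω, hω⟩ := h1
  obtain ⟨hsym2, hdiag2⟩ := h2
  have hn4 : (4:ℝ) ≤ (n:ℝ) := by exact_mod_cast hn
  have hne1 : (n:ℝ) - 1 ≠ 0 := by linarith
  have hne2 : (n:ℝ) - 2 ≠ 0 := by linarith
  -- row sums of d₂ vanish
  have hrow : ∀ p : Fin n, ∑ k, d₂ p k = 0 := by
    intro p
    set e : Fin n → Fin n → ℝ := fun i j =>
      if i = j then 0 else (if i = p then (1:ℝ) else 0) + (if j = p then 1 else 0) with he_def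
    have he : InCPI e := by
      refine ⟨⟨?_, ?_⟩, ⟨fun i => if i = p then 1 else 0, ?_⟩⟩
      · intro i j
        by_cases h : i = j
        · simp [he_def, h]
        · simp [he_def, h, Ne.symm h]; ring
      · intro i; simp [he_def]
      · intro i j hij; simp [he_def, hij]
    have h0 := h2o e he
    have hgi : ginner d₂ e = 2 * ∑ k, d₂ p k := by
      unfold ginner
      have key : ∀ i j : Fin n, d₂ i j * e i j =
          (if i = p then d₂ i j else 0) + (if j = p then d₂ i j else 0) := by
        intro i j
        rcases eq_or_ne i j with h | h
        · subst h; simp [he_def, hdiag2]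
        · simp only [he_def, if_neg h, mul_add, mul_ite, mul_one, mul_zero]
      simp only [key]
      have inner : ∀ i : Fin n,
          ∑ j : Fin n, ((if i = p then d₂ i j else 0) + (if j = p then d₂ i j else 0)) =
            (if i = p then ∑ j : Fin n, d₂ i j else 0) + d₂ i p := by
        intro i
        rw [Finset.sum_add_distrib]
        congr 1
        · split_ifs <;> simp
        · simp
      rw [Finset.sum_congr rfl (fun i _ => inner i), Finset.sum_add_distrib]
      simp only [Finset.sum_ite_eq', Finset.mem_univ, if_true]
      have : ∑ i : Fin n, d₂ i p = ∑ i : Fin n, d₂ p i :=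
        Finset.sum_congr rfl (fun i _ => hsym2 i p)
      rw [this]; ring
    rw [hgi] at h0; linarith
  -- row sums of d₁
  set W : ℝ := ∑ k, ω k with hW
  have hrow1 : ∀ i : Fin n, ∑ k, d₁ i k = ((n:ℝ) - 2) * ω i + W := by
    intro i
    rw [← Finset.sum_erase_add _ _ (Finset.mem_univ i), hdiag1, add_zero]
    have : ∀ k ∈ Finset.univ.erase i, d₁ i k = ω i + ω k := by
      intro k hk
      exact hω i k (Ne.symm (Finset.ne_of_mem_erase hk))
    rw [Finset.sum_congr rfl this, Finset.sum_add_distrib, Finset.sum_const,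
      Finset.card_erase_of_mem (Finset.mem_univ i), Finset.card_univ, Fintype.card_fin,
      hW, ← Finset.sum_erase_add _ ω (Finset.mem_univ i)]
    have hcast : ((n - 1 : ℕ) : ℝ) = (n:ℝ) - 1 := by
      have : 1 ≤ n := by omega
      push_cast [this]; ring
    rw [nsmul_eq_mul, hcast]
    ring
  have hrowd : ∀ i : Fin n, ∑ k, d i k = ((n:ℝ) - 2) * ω i + W := by
    intro i
    have : ∑ k, d i k = ∑ k, d₁ i k + ∑ k, d₂ i k := by
      rw [← Finset.sum_add_distrib]
      exact Finset.sum_congr rfl (fun k _ => by rw [hdd]; rfl)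
    rw [this, hrow i, add_zero, hrow1 i]
  have htot : ∑ l : Fin n, ∑ k : Fin n, d l k = (2 * (n:ℝ) - 2) * W := by
    rw [Finset.sum_congr rfl (fun l _ => hrowd l), Finset.sum_add_distrib,
      Finset.sum_const, Finset.card_univ, Fintype.card_fin, ← Finset.mul_sum, ← hW,
      nsmul_eq_mul]
    ring
  constructor
  · intro i j hij
    rw [hω i j hij, hrowd i, hrowd j, htot]
    field_simp
    ring
  · exact hdiag1
end

section
/- Let n ≥ 4 and let d be a symmetric weighted graph on n vertices, written as d = d₁ + d₂ with d₁ ∈ CPI and d₂ orthogonal to CPI. Set T = (1/(n−1)) ∑_{j,k} d j k. Then for every Hamiltonian circuit v : Fin n → Fin n (a bijection), the d-length ∑_{t : Fin n} d (v t) (v (t+1)) equals T plus the d₂-length ∑_{t : Fin n} d₂ (v t) (v (t+1)), where t+1 denotes cyclic addition in Fin n. -/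
/-!
Along a Hamiltonian circuit every vertex is entered once and left once, so a CPI graph
`d₁ i j = ω i + ω j` has circuit length `2 ∑ ω`, independently of the circuit. Its total weight
is `2 (n - 1) ∑ ω`, while a graph orthogonal to CPI has total weight zero (it is orthogonal to
the complete graph with unit weights, which lies in CPI). Hence the constant part of the length
is the total weight of `d` divided by `n - 1`.
-/

open Finset

theorem finRotate_apply_ne {n : ℕ} (hn : 2 ≤ n) (t : Fin n) : finRotate n t ≠ t := by
  rw [← Equiv.Perm.mem_support, support_finRotate_of_le hn]
  exact mem_univ t

theorem hamLen_add {n : ℕ} (d e : Fin n → Fin n → ℝ) (v : Fin n → Fin n) :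
    hamLen (d + e) v = hamLen d v + hamLen e v :=
  sum_add_distrib

theorem hamLen_eq_of_offDiag {n : ℕ} (hn : 2 ≤ n) {d : Fin n → Fin n → ℝ} {ω : Fin n → ℝ}
    (hω : ∀ i j, i ≠ j → d i j = ω i + ω j) {v : Fin n → Fin n} (hv : Function.Bijective v) :
    hamLen d v = 2 * ∑ i, ω i := by
  have hsum : ∀ u : Fin n → Fin n, Function.Bijective u → ∑ t, ω (u t) = ∑ i, ω i :=
    fun u hu => Fintype.sum_bijective u hu _ _ fun _ => rfl
  have hedge : ∀ t, d (v t) (v (finRotate n t)) = ω (v t) + ω (v (finRotate n t)) :=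
    fun t => hω _ _ fun h => finRotate_apply_ne hn t (hv.injective h).symm
  rw [hamLen, sum_congr rfl fun t _ => hedge t, sum_add_distrib, hsum v hv,
    hsum (fun t => v (finRotate n t)) (hv.comp (finRotate n).bijective)]
  ring

theorem sum_sum_eq_of_offDiag {n : ℕ} {d : Fin n → Fin n → ℝ} {ω : Fin n → ℝ}
    (hdiag : ∀ i, d i i = 0) (hω : ∀ i j, i ≠ j → d i j = ω i + ω j) :
    ∑ i, ∑ j, d i j = 2 * ((n : ℝ) - 1) * ∑ i, ω i := by
  have hentry : ∀ i j, d i j = ω i + ω j - if i = j then ω i + ω j else 0 := by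
    intro i j
    by_cases hij : i = j
    · subst hij; simp [hdiag]
    · simp [hij, hω i j hij]
  simp only [hentry, sum_sub_distrib, sum_add_distrib, sum_ite_eq, mem_univ, if_true,
    sum_const, card_univ, Fintype.card_fin, nsmul_eq_mul, ← mul_sum]
  ring

theorem inCPI_offDiag_one (n : ℕ) : InCPI (fun i j : Fin n => if i = j then (0 : ℝ) else 1) := by
  refine ⟨⟨fun i j => ?_, fun i => if_pos rfl⟩, fun _ => 1 / 2, fun i j hij => ?_⟩
  · simp only [eq_comm]
  · simp only [if_neg hij]; norm_num

theorem OrthCPI.sum_sum_eq_zero {n : ℕ} {d : Fin n → Fin n → ℝ} (hd : OrthCPI d)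
    (hdiag : ∀ i, d i i = 0) : ∑ i, ∑ j, d i j = 0 := by
  rw [← hd _ (inCPI_offDiag_one n), ginner]
  refine sum_congr rfl fun i _ => sum_congr rfl fun j _ => ?_
  by_cases hij : i = j
  · simp [hij, hdiag]
  · simp [hij]

theorem stmt18_general (n : ℕ) (hn : 4 ≤ n) (d d₁ d₂ : Fin n → Fin n → ℝ)
    (h1 : InCPI d₁) (h2 : IsSymGraph d₂) (h2o : OrthCPI d₂) (hdd : d = d₁ + d₂)
    (v : Fin n → Fin n) (hv : Function.Bijective v) :
    hamLen d v = (1 / ((n : ℝ) - 1)) * (∑ j : Fin n, ∑ k : Fin n, d j k) + hamLen d₂ v := by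
  obtain ⟨⟨-, hdiag₁⟩, ω, hω⟩ := h1
  have htotal : ∑ j, ∑ k, d j k = 2 * ((n : ℝ) - 1) * ∑ i, ω i := by
    simp only [hdd, Pi.add_apply, sum_add_distrib, sum_sum_eq_of_offDiag hdiag₁ hω,
      h2o.sum_sum_eq_zero h2.2, add_zero]
  have hn1 : (n : ℝ) - 1 ≠ 0 := by
    have : (4 : ℝ) ≤ n := by exact_mod_cast hn
    linarith
  rw [htotal, hdd, hamLen_add, hamLen_eq_of_offDiag (by omega) hω hv]
  field_simp

theorem stmt18 (n : ℕ) (hn : 4 ≤ n) (d d₁ d₂ : Fin n → Fin n → ℝ) (hd : IsSymGraph d)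
    (h1 : InCPI d₁) (h2 : IsSymGraph d₂) (h2o : OrthCPI d₂) (hdd : d = d₁ + d₂)
    (v : Fin n → Fin n) (hv : Function.Bijective v) :
    hamLen d v = (1 / ((n : ℝ) - 1)) * (∑ j : Fin n, ∑ k : Fin n, d j k) + hamLen d₂ v :=
  stmt18_general n hn d d₁ d₂ h1 h2 h2o hdd v hv
end
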